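/- arXiv:2003.08992 — 4 statements merged into one kernel-verified Lean document; each statement's English description precedes it below -/
import Mathlib

section
/- For every index 1 ≤ i ≤ g+n and all finite-dimensional left H-modules I, J, the reflection equation R_{IJ} X(i)_{I,1} R'_{IJ} X(i)_{J,2} = X(i)_{J,2} R_{IJ} X(i)_{I,1} R'_{IJ} holds in L_{g,n}(H) ⊗ End_k(I) ⊗ End_k(J). -/
/-! The fusion relation for the pair `(I, J)` reads `X_{I⊗J} R'_{IJ} = X₁ R'_{IJ} X₂`.
Transported along the flip `J ⊗ I ≅ I ⊗ J`, the fusion relation for `(J, I)` becomes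
`R_{IJ} X_{I⊗J} = X₂ R_{IJ} X₁`: conjugation by the flip swaps the two legs, turns `R'_{JI}`
into `R_{IJ}`, and turns `ρ_{J⊗I}` into `R_{IJ} ρ_{I⊗J} R_{IJ}⁻¹` because `R Δ(h) = Δ^op(h) R`.
Hence `R X₁ R' X₂ = R X_{I⊗J} R' = X₂ R X₁ R'`. -/
open TensorProduct

noncomputable section

set_option maxHeartbeats 1000000

namespace CombQuant

/-- A quasitriangular structure on the Hopf algebra `H`: an invertible element `R ∈ H ⊗ H`
satisfying `(Δ ⊗ id)(R) = R₁₃R₂₃`, `(id ⊗ Δ)(R) = R₁₃R₁₂` and `R Δ(x) = τ(Δ(x)) R` for all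
`x ∈ H`; we moreover require the antipode to be bijective. -/
structure QuasiTriangular (k H : Type) [Field k] [Ring H] [HopfAlgebra k H] : Type where
  R : (H ⊗[k] H)ˣ
  comul_left :
    ((Algebra.TensorProduct.assoc k k k H H H).toAlgHom.comp
      (Algebra.TensorProduct.map (Bialgebra.comulAlgHom k H) (AlgHom.id k H))) R.val
    = (Algebra.TensorProduct.map (AlgHom.id k H)
          (Algebra.TensorProduct.includeRight : H →ₐ[k] H ⊗[k] H)) R.val *
      (Algebra.TensorProduct.includeRight : (H ⊗[k] H) →ₐ[k] H ⊗[k] (H ⊗[k] H)) R.val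
  comul_right :
    (Algebra.TensorProduct.map (AlgHom.id k H) (Bialgebra.comulAlgHom k H)) R.val
    = (Algebra.TensorProduct.map (AlgHom.id k H)
          (Algebra.TensorProduct.includeRight : H →ₐ[k] H ⊗[k] H)) R.val *
      (Algebra.TensorProduct.map (AlgHom.id k H)
          (Algebra.TensorProduct.includeLeft : H →ₐ[k] H ⊗[k] H)) R.val
  intertwine : ∀ x : H,
    R.val * Bialgebra.comulAlgHom k H x
      = (Algebra.TensorProduct.comm k H H) (Bialgebra.comulAlgHom k H x) * R.val
  antipode_bijective : Function.Bijective (HopfAlgebra.antipode (R := k) (A := H))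

/-- A finite-dimensional left `H`-module: a finite-dimensional `k`-vector space together with
the representation map `ρ_I : H →ₐ End_k(I)`. -/
structure FDRep (k H : Type) [Field k] [Ring H] [Algebra k H] : Type 1 where
  carrier : Type
  [isAddCommGroup : AddCommGroup carrier]
  [isModule : Module k carrier]
  [isFD : FiniteDimensional k carrier]
  rep : H →ₐ[k] Module.End k carrier

attribute [instance] FDRep.isAddCommGroup FDRep.isModule FDRep.isFD

variable {k H : Type} [Field k] [Ring H] [HopfAlgebra k H] [FiniteDimensional k H]

/-- The tensor product of two finite-dimensional `H`-modules: `h` acts through the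
comultiplication. -/
def FDRep.tensor (I J : FDRep k H) : FDRep k H where
  carrier := I.carrier ⊗[k] J.carrier
  rep := (Module.endTensorEndAlgHom (R := k) (S := k) (A := k)
            (M := I.carrier) (N := J.carrier)).comp
           ((Algebra.TensorProduct.map I.rep J.rep).comp (Bialgebra.comulAlgHom k H))

/-- Index type for the matrix generators of `L_{g,n}(H)`: `b_i`, `a_i` (`1 ≤ i ≤ g`) and
`m_j` (`g+1 ≤ j ≤ g+n`). -/
abbrev GenIdx (g n : ℕ) := (Fin g ⊕ Fin g) ⊕ Fin n

/-- The site `i ∈ {1, …, g+n}` attached to a generator: `b_i, a_i ↦ i`; `m_j ↦ j`. -/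
def GenIdx.site {g n : ℕ} : GenIdx g n → ℕ
  | .inl (.inl i) => i.1 + 1
  | .inl (.inr i) => i.1 + 1
  | .inr j => g + j.1 + 1

/-- `V_{g,n}`: the direct sum of `2g+n` copies of `H*`, indexed by the generators. -/
abbrev Vgn (k H : Type) [Field k] [Ring H] [Algebra k H] (g n : ℕ) :=
  GenIdx g n → Module.Dual k H

/-- The tensor algebra `T(V_{g,n})`. -/
abbrev Tgn (k H : Type) [Field k] [Ring H] [Algebra k H] (g n : ℕ) :=
  TensorAlgebra k (Vgn k H g n)

/-- The matrix generator attached to the generator index `x` and a linear map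
`ρ : H → End_k(W)` (e.g. the representation map of a module), as an element of
`T(V_{g,n}) ⊗ End_k(W)`; it is the image under `ι_x ⊗ id` of the tensor corresponding to `ρ`
via `H* ⊗ End_k(W) ≅ Hom_k(H, End_k(W))`. -/
def genT {g n : ℕ} (x : GenIdx g n) {W : Type} [AddCommGroup W] [Module k W]
    (ρ : H →ₗ[k] Module.End k W) : Tgn k H g n ⊗[k] Module.End k W :=
  TensorProduct.map
    ((TensorAlgebra.ι k).comp (LinearMap.single k (fun _ : GenIdx g n => Module.Dual k H) x))
    LinearMap.id
    ((dualTensorHomEquiv k H (Module.End k W)).symm ρ)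

/-- The canonical algebra embedding `End_k(I) → End_k(I ⊗ J)`, `e ↦ e ⊗ id`
(first leg of `End_k(I) ⊗ End_k(J) ≅ End_k(I ⊗ J)`). -/
def embEnd1 (I J : FDRep k H) :
    Module.End k I.carrier →ₐ[k] Module.End k (I.carrier ⊗[k] J.carrier) :=
  (Module.endTensorEndAlgHom (R := k) (S := k) (A := k)
    (M := I.carrier) (N := J.carrier)).comp Algebra.TensorProduct.includeLeft

/-- The canonical algebra embedding `End_k(J) → End_k(I ⊗ J)`, `e ↦ id ⊗ e`
(second leg of `End_k(I) ⊗ End_k(J) ≅ End_k(I ⊗ J)`). -/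
def embEnd2 (I J : FDRep k H) :
    Module.End k J.carrier →ₐ[k] Module.End k (I.carrier ⊗[k] J.carrier) :=
  (Module.endTensorEndAlgHom (R := k) (S := k) (A := k)
    (M := I.carrier) (N := J.carrier)).comp Algebra.TensorProduct.includeRight

/-- `R_{IJ} = (ρ_I ⊗ ρ_J)(R)` as a unit of `End_k(I ⊗ J) ≅ End_k(I) ⊗ End_k(J)`. -/
def Rmat (qt : QuasiTriangular k H) (I J : FDRep k H) :
    (Module.End k (I.carrier ⊗[k] J.carrier))ˣ :=
  Units.map ((Module.endTensorEndAlgHom (R := k) (S := k) (A := k)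
      (M := I.carrier) (N := J.carrier)).comp
    (Algebra.TensorProduct.map I.rep J.rep)).toRingHom.toMonoidHom qt.R

/-- `R'_{IJ} = (ρ_I ⊗ ρ_J)(R')` (with `R' = τ(R)`) as a unit of
`End_k(I ⊗ J) ≅ End_k(I) ⊗ End_k(J)`. -/
def Rmat' (qt : QuasiTriangular k H) (I J : FDRep k H) :
    (Module.End k (I.carrier ⊗[k] J.carrier))ˣ :=
  Units.map ((Module.endTensorEndAlgHom (R := k) (S := k) (A := k)
      (M := I.carrier) (N := J.carrier)).comp
    ((Algebra.TensorProduct.map I.rep J.rep).comp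
      (Algebra.TensorProduct.comm k H H).toAlgHom)).toRingHom.toMonoidHom qt.R

/-- `X(x)_{I,1}`: the generator matrix on `I`, embedded in
`T(V_{g,n}) ⊗ End(I ⊗ J) ≅ T(V_{g,n}) ⊗ End I ⊗ End J`. -/
def genT1 {g n : ℕ} (x : GenIdx g n) (I J : FDRep k H) :
    Tgn k H g n ⊗[k] Module.End k (I.carrier ⊗[k] J.carrier) :=
  (Algebra.TensorProduct.map (AlgHom.id k (Tgn k H g n)) (embEnd1 I J))
    (genT x I.rep.toLinearMap)

/-- `X(x)_{J,2}`: the generator matrix on `J`, embedded in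
`T(V_{g,n}) ⊗ End(I ⊗ J) ≅ T(V_{g,n}) ⊗ End I ⊗ End J`. -/
def genT2 {g n : ℕ} (x : GenIdx g n) (I J : FDRep k H) :
    Tgn k H g n ⊗[k] Module.End k (I.carrier ⊗[k] J.carrier) :=
  (Algebra.TensorProduct.map (AlgHom.id k (Tgn k H g n)) (embEnd2 I J))
    (genT x J.rep.toLinearMap)

/-- `R_{IJ}` as a unit of `T(V_{g,n}) ⊗ End(I ⊗ J)`. -/
def RmatT (g n : ℕ) (qt : QuasiTriangular k H) (I J : FDRep k H) :
    (Tgn k H g n ⊗[k] Module.End k (I.carrier ⊗[k] J.carrier))ˣ :=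
  Units.map (Algebra.TensorProduct.includeRight (R := k) (A := Tgn k H g n)
    ).toRingHom.toMonoidHom (Rmat qt I J)

/-- `R'_{IJ}` as a unit of `T(V_{g,n}) ⊗ End(I ⊗ J)`. -/
def RmatT' (g n : ℕ) (qt : QuasiTriangular k H) (I J : FDRep k H) :
    (Tgn k H g n ⊗[k] Module.End k (I.carrier ⊗[k] J.carrier))ˣ :=
  Units.map (Algebra.TensorProduct.includeRight (R := k) (A := Tgn k H g n)
    ).toRingHom.toMonoidHom (Rmat' qt I J)

/-- The fusion relator `X(x)_{I⊗J} − X(x)_{I,1} R'_{IJ} X(x)_{J,2} R'_{IJ}⁻¹`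
in `T(V_{g,n}) ⊗ End(I ⊗ J)`. -/
def fusionRel {g n : ℕ} (qt : QuasiTriangular k H) (I J : FDRep k H) (x : GenIdx g n) :
    Tgn k H g n ⊗[k] Module.End k (I.carrier ⊗[k] J.carrier) :=
  (genT x (W := I.carrier ⊗[k] J.carrier) (I.tensor J).rep.toLinearMap :
    Tgn k H g n ⊗[k] Module.End k (I.carrier ⊗[k] J.carrier))
  - genT1 x I J * (RmatT' g n qt I J).val * genT2 x I J * ((RmatT' g n qt I J)⁻¹).val

/-- The `B(i)`–`A(i)` exchange relator
`R_{IJ} B(i)₁ R'_{IJ} A(i)₂ − A(i)₂ R_{IJ} B(i)₁ R_{IJ}⁻¹` in `T(V_{g,n}) ⊗ End(I ⊗ J)`. -/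
def exchangeBARel {g n : ℕ} (qt : QuasiTriangular k H) (I J : FDRep k H) (i : Fin g) :
    Tgn k H g n ⊗[k] Module.End k (I.carrier ⊗[k] J.carrier) :=
  (RmatT g n qt I J).val * genT1 (Sum.inl (Sum.inl i) : GenIdx g n) I J *
      (RmatT' g n qt I J).val * genT2 (Sum.inl (Sum.inr i) : GenIdx g n) I J
  - genT2 (Sum.inl (Sum.inr i) : GenIdx g n) I J * (RmatT g n qt I J).val *
      genT1 (Sum.inl (Sum.inl i) : GenIdx g n) I J * ((RmatT g n qt I J)⁻¹).val

/-- The exchange relator for generators at distinct sites: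
`R_{IJ} X(i)₁ R_{IJ}⁻¹ Y(j)₂ − Y(j)₂ R_{IJ} X(i)₁ R_{IJ}⁻¹` in `T(V_{g,n}) ⊗ End(I ⊗ J)`. -/
def exchangeRel {g n : ℕ} (qt : QuasiTriangular k H) (I J : FDRep k H) (x y : GenIdx g n) :
    Tgn k H g n ⊗[k] Module.End k (I.carrier ⊗[k] J.carrier) :=
  (RmatT g n qt I J).val * genT1 x I J * ((RmatT g n qt I J)⁻¹).val * genT2 y I J
  - genT2 y I J * (RmatT g n qt I J).val * genT1 x I J * ((RmatT g n qt I J)⁻¹).val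

/-- The "entry extraction" map `(id ⊗ λ) : T ⊗ W → T` for a linear form `λ` on `W`. -/
def cntr {T : Type} [AddCommGroup T] [Module k T] {W : Type} [AddCommGroup W] [Module k W]
    (lam : Module.Dual k W) (t : T ⊗[k] W) : T :=
  TensorProduct.rid k T (TensorProduct.map LinearMap.id lam t)

/-- The set of entries of all defining relators of `L_{g,n}(H)`. -/
def relSet (g n : ℕ) (qt : QuasiTriangular k H) : Set (Tgn k H g n) :=
  { t | (∃ (I J : FDRep k H) (x : GenIdx g n)
            (lam : Module.Dual k (Module.End k (I.carrier ⊗[k] J.carrier))),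
          t = cntr lam (fusionRel qt I J x)) ∨
        (∃ (I J : FDRep k H) (i : Fin g)
            (lam : Module.Dual k (Module.End k (I.carrier ⊗[k] J.carrier))),
          t = cntr lam (exchangeBARel qt I J i)) ∨
        (∃ (I J : FDRep k H) (x y : GenIdx g n), x.site < y.site ∧
          ∃ lam : Module.Dual k (Module.End k (I.carrier ⊗[k] J.carrier)),
          t = cntr lam (exchangeRel qt I J x y)) }

/-- The relation generating (as a two-sided ideal) the defining ideal of `L_{g,n}(H)`. -/
def lgnRel (g n : ℕ) (qt : QuasiTriangular k H) : Tgn k H g n → Tgn k H g n → Prop :=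
  fun t s => t ∈ relSet g n qt ∧ s = 0

/-- The algebra `L_{g,n}(H)`: the quotient of `T(V_{g,n})` by the two-sided ideal generated
by the entries of the defining relators. -/
def Lgn (g n : ℕ) (qt : QuasiTriangular k H) : Type := RingQuot (lgnRel g n qt)

instance (g n : ℕ) (qt : QuasiTriangular k H) : Ring (Lgn g n qt) :=
  inferInstanceAs (Ring (RingQuot (lgnRel g n qt)))

instance (g n : ℕ) (qt : QuasiTriangular k H) : Algebra k (Lgn g n qt) :=
  inferInstanceAs (Algebra k (RingQuot (lgnRel g n qt)))

/-- The canonical projection `T(V_{g,n}) → L_{g,n}(H)`. -/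
def lgnProj (g n : ℕ) (qt : QuasiTriangular k H) : Tgn k H g n →ₐ[k] Lgn g n qt :=
  RingQuot.mkAlgHom k (lgnRel g n qt)

/-- The matrix generator `X(x)` attached to `ρ : H → End_k(W)`, as an element of
`L_{g,n}(H) ⊗ End_k(W)`. -/
def genL {g n : ℕ} (qt : QuasiTriangular k H) (x : GenIdx g n) {W : Type} [AddCommGroup W]
    [Module k W] (ρ : H →ₗ[k] Module.End k W) : Lgn g n qt ⊗[k] Module.End k W :=
  TensorProduct.map (lgnProj g n qt).toLinearMap LinearMap.id (genT x ρ)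


/-- `X(x)_{I,1}`: the generator matrix on `I`, embedded in
`L_{g,n}(H) ⊗ End(I ⊗ J) ≅ L_{g,n}(H) ⊗ End I ⊗ End J`. -/
def genL1 {g n : ℕ} (qt : QuasiTriangular k H) (x : GenIdx g n) (I J : FDRep k H) :
    Lgn g n qt ⊗[k] Module.End k (I.carrier ⊗[k] J.carrier) :=
  (Algebra.TensorProduct.map (AlgHom.id k (Lgn g n qt)) (embEnd1 I J))
    (genL qt x I.rep.toLinearMap)

/-- `X(x)_{J,2}`: the generator matrix on `J`, embedded in
`L_{g,n}(H) ⊗ End(I ⊗ J) ≅ L_{g,n}(H) ⊗ End I ⊗ End J`. -/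
def genL2 {g n : ℕ} (qt : QuasiTriangular k H) (x : GenIdx g n) (I J : FDRep k H) :
    Lgn g n qt ⊗[k] Module.End k (I.carrier ⊗[k] J.carrier) :=
  (Algebra.TensorProduct.map (AlgHom.id k (Lgn g n qt)) (embEnd2 I J))
    (genL qt x J.rep.toLinearMap)

/-- `R_{IJ}` as an element of `L_{g,n}(H) ⊗ End(I ⊗ J)`. -/
def RmatL (g n : ℕ) (qt : QuasiTriangular k H) (I J : FDRep k H) :
    Lgn g n qt ⊗[k] Module.End k (I.carrier ⊗[k] J.carrier) :=
  (Algebra.TensorProduct.includeRight (R := k) (A := Lgn g n qt)) (Rmat qt I J).val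

/-- `R'_{IJ}` as an element of `L_{g,n}(H) ⊗ End(I ⊗ J)`. -/
def RmatL' (g n : ℕ) (qt : QuasiTriangular k H) (I J : FDRep k H) :
    Lgn g n qt ⊗[k] Module.End k (I.carrier ⊗[k] J.carrier) :=
  (Algebra.TensorProduct.includeRight (R := k) (A := Lgn g n qt)) (Rmat' qt I J).val

section TensorContraction

variable {T T' W : Type} [AddCommGroup T] [Module k T] [AddCommGroup T'] [Module k T']
  [AddCommGroup W] [Module k W]

theorem cntr_rTensor (f : T →ₗ[k] T') (lam : Module.Dual k W) (t : T ⊗[k] W) :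
    cntr lam (f.rTensor W t) = f (cntr lam t) := by
  induction t using TensorProduct.induction_on with
  | zero => simp [cntr]
  | tmul s w => simp [cntr]
  | add a b ha hb => simp_all [cntr]

theorem eq_zero_of_forall_cntr_eq_zero {t : T ⊗[k] W}
    (h : ∀ lam : Module.Dual k W, cntr lam t = 0) : t = 0 := by
  classical
  let b := Module.Basis.ofVectorSpace k W
  apply (TensorProduct.equivFinsuppOfBasisRight b).injective
  ext i
  rw [TensorProduct.equivFinsuppOfBasisRight_apply, map_zero]
  exact h (b.coord i)

end TensorContraction

section IncludeRight

variable {A B : Type} [Ring A] [Algebra k A] [Ring B] [Algebra k B]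

theorem lTensor_mulLeft_apply (b : B) (t : A ⊗[k] B) :
    (LinearMap.mulLeft k b).lTensor A t = Algebra.TensorProduct.includeRight b * t := by
  induction t using TensorProduct.induction_on with
  | zero => simp
  | tmul a c => simp [Algebra.TensorProduct.tmul_mul_tmul]
  | add s t hs ht => simp_all [mul_add]

theorem lTensor_mulRight_apply (b : B) (t : A ⊗[k] B) :
    (LinearMap.mulRight k b).lTensor A t = t * Algebra.TensorProduct.includeRight b := by
  induction t using TensorProduct.induction_on with
  | zero => simp
  | tmul a c => simp [Algebra.TensorProduct.tmul_mul_tmul]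
  | add s t hs ht => simp_all [add_mul]

end IncludeRight

theorem lTensor_dualTensorHomEquiv_symm {M N N' : Type} [AddCommGroup M] [Module k M]
    [FiniteDimensional k M] [AddCommGroup N] [Module k N] [AddCommGroup N'] [Module k N']
    (F : N →ₗ[k] N') (ρ : M →ₗ[k] N) :
    F.lTensor _ ((dualTensorHomEquiv k M N).symm ρ)
      = (dualTensorHomEquiv k M N').symm (F ∘ₗ ρ) := by
  apply (dualTensorHomEquiv k M N').injective
  rw [LinearEquiv.apply_symm_apply]
  change (dualTensorHom k M N' ∘ₗ F.lTensor _) _ = _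
  rw [dualTensorHom_comp_lTensor, LinearMap.comp_apply]
  change F ∘ₗ (dualTensorHomEquiv k M N) _ = _
  rw [LinearEquiv.apply_symm_apply]

section Generators

variable {g n : ℕ} (qt : QuasiTriangular k H) (x : GenIdx g n) {W W' : Type}
  [AddCommGroup W] [Module k W] [AddCommGroup W'] [Module k W']

theorem lTensor_genT (F : Module.End k W →ₗ[k] Module.End k W') (ρ : H →ₗ[k] Module.End k W) :
    F.lTensor _ (genT x ρ) = (genT x (F ∘ₗ ρ) : Tgn k H g n ⊗[k] _) := by
  rw [genT, genT, ← lTensor_dualTensorHomEquiv_symm, LinearMap.lTensor_map,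
    LinearMap.map_lTensor]
  rfl

theorem lTensor_genL (F : Module.End k W →ₗ[k] Module.End k W') (ρ : H →ₗ[k] Module.End k W) :
    F.lTensor _ (genL qt x ρ) = genL qt x (F ∘ₗ ρ) := by
  rw [genL, genL, ← lTensor_genT, LinearMap.lTensor_map, LinearMap.map_lTensor]
  rfl

end Generators

section Fusion

variable {g n : ℕ} {qt : QuasiTriangular k H} {I J : FDRep k H}

theorem lgnProj_rTensor_eq_zero {W : Type} [AddCommGroup W] [Module k W]
    {r : Tgn k H g n ⊗[k] W}
    (hr : ∀ lam : Module.Dual k W, cntr lam r ∈ relSet g n qt) :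
    (lgnProj g n qt).toLinearMap.rTensor W r = 0 :=
  eq_zero_of_forall_cntr_eq_zero fun lam => (cntr_rTensor _ lam r).trans <|
    (RingQuot.mkAlgHom_rel k (show lgnRel g n qt (cntr lam r) 0 from ⟨hr lam, rfl⟩)).trans
      (map_zero _)

theorem genT1_eq (x : GenIdx g n) :
    genT1 x I J = genT x ((embEnd1 I J).toLinearMap ∘ₗ I.rep.toLinearMap) :=
  lTensor_genT x _ _

theorem genT2_eq (x : GenIdx g n) :
    genT2 x I J = genT x ((embEnd2 I J).toLinearMap ∘ₗ J.rep.toLinearMap) :=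
  lTensor_genT x _ _

theorem genL1_eq (x : GenIdx g n) :
    genL1 qt x I J = genL qt x ((embEnd1 I J).toLinearMap ∘ₗ I.rep.toLinearMap) :=
  lTensor_genL qt x _ _

theorem genL2_eq (x : GenIdx g n) :
    genL2 qt x I J = genL qt x ((embEnd2 I J).toLinearMap ∘ₗ J.rep.toLinearMap) :=
  lTensor_genL qt x _ _

theorem genL_tensor_mul_RmatL' (x : GenIdx g n) :
    (genL qt x (W := I.carrier ⊗[k] J.carrier) (I.tensor J).rep.toLinearMap :
        Lgn g n qt ⊗[k] Module.End k (I.carrier ⊗[k] J.carrier)) * RmatL' g n qt I J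
      = genL1 qt x I J * RmatL' g n qt I J * genL2 qt x I J := by
  let π := Algebra.TensorProduct.map (lgnProj g n qt)
    (AlgHom.id k (Module.End k (I.carrier ⊗[k] J.carrier)))
  have hπ_genT : ∀ ρ, π (genT x ρ) = genL qt x ρ := fun _ => rfl
  have hπ_tensor : π (genT x (W := I.carrier ⊗[k] J.carrier) (I.tensor J).rep.toLinearMap)
      = genL qt x (W := I.carrier ⊗[k] J.carrier) (I.tensor J).rep.toLinearMap := rfl
  have hπ_R : ∀ e,
      π (Algebra.TensorProduct.includeRight e) = Algebra.TensorProduct.includeRight e :=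
    fun e => by simp [π]
  have hrel : π (fusionRel qt I J x) = 0 :=
    lgnProj_rTensor_eq_zero fun lam => Or.inl ⟨I, J, x, lam, rfl⟩
  rw [fusionRel, map_sub, sub_eq_zero, map_mul, map_mul, map_mul, hπ_tensor, genT1_eq,
    genT2_eq, hπ_genT, hπ_genT, ← genL1_eq, ← genL2_eq] at hrel
  have hπ_R' : π (RmatT' g n qt I J) = RmatL' g n qt I J := hπ_R _
  have hπ_R'inv : π ↑(RmatT' g n qt I J)⁻¹
      = Algebra.TensorProduct.includeRight ↑(Rmat' qt I J)⁻¹ := by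
    rw [RmatT', Units.coe_map_inv]
    exact hπ_R _
  rw [hπ_R', hπ_R'inv] at hrel
  refine (congrArg (· * RmatL' g n qt I J) hrel).trans ?_
  rw [mul_assoc _ (Algebra.TensorProduct.includeRight _), RmatL', ← map_mul,
    Units.inv_mul, map_one, mul_one]

end Fusion

section Flip

variable {M N : Type} [AddCommGroup M] [Module k M] [AddCommGroup N] [Module k N]

variable (M N) in
def flipConj : Module.End k (N ⊗[k] M) ≃ₐ[k] Module.End k (M ⊗[k] N) :=
  (TensorProduct.comm k N M).conjAlgEquiv k

theorem flipConj_map (f : Module.End k M) (f' : Module.End k N) :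
    flipConj M N (TensorProduct.map f' f) = TensorProduct.map f f' := by
  apply TensorProduct.ext'
  intro v w
  simp [flipConj, LinearEquiv.conjAlgEquiv_apply]

theorem flipConj_endTensorEnd {A : Type} [Ring A] [Algebra k A] (ρ : A →ₐ[k] Module.End k M)
    (ρ' : A →ₐ[k] Module.End k N) (s : A ⊗[k] A) :
    flipConj M N (Module.endTensorEndAlgHom (R := k) (S := k) (A := k)
        (Algebra.TensorProduct.map ρ' ρ s))
      = Module.endTensorEndAlgHom (R := k) (S := k) (A := k)
          (Algebra.TensorProduct.map ρ ρ' (Algebra.TensorProduct.comm k A A s)) := by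
  induction s using TensorProduct.induction_on with
  | zero => simp
  | tmul a a' => exact flipConj_map (ρ a') (ρ' a)
  | add s s' hs hs' => simp only [map_add, hs, hs']

end Flip

section FlipL

variable {g n : ℕ} {qt : QuasiTriangular k H} {I J : FDRep k H}

variable (qt I J) in
def flipL : Lgn g n qt ⊗[k] Module.End k (J.carrier ⊗[k] I.carrier) →ₐ[k]
    Lgn g n qt ⊗[k] Module.End k (I.carrier ⊗[k] J.carrier) :=
  Algebra.TensorProduct.map (AlgHom.id k _) (flipConj I.carrier J.carrier).toAlgHom

theorem flipL_genL1 (x : GenIdx g n) : flipL qt I J (genL1 qt x J I) = genL2 qt x I J := by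
  have hemb : (flipConj I.carrier J.carrier).toLinearMap ∘ₗ (embEnd1 J I).toLinearMap
      = (embEnd2 I J).toLinearMap :=
    LinearMap.ext fun e => flipConj_map 1 e
  rw [genL1_eq, genL2_eq, ← hemb]
  exact lTensor_genL qt x _ _

theorem flipL_genL2 (x : GenIdx g n) : flipL qt I J (genL2 qt x J I) = genL1 qt x I J := by
  have hemb : (flipConj I.carrier J.carrier).toLinearMap ∘ₗ (embEnd2 J I).toLinearMap
      = (embEnd1 I J).toLinearMap :=
    LinearMap.ext fun e => flipConj_map e 1
  rw [genL1_eq, genL2_eq, ← hemb]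
  exact lTensor_genL qt x _ _

theorem flipL_RmatL' : flipL qt I J (RmatL' g n qt J I) = RmatL g n qt I J := by
  have hR : flipConj I.carrier J.carrier (Rmat' qt J I).val = (Rmat qt I J).val := by
    change flipConj I.carrier J.carrier (Module.endTensorEndAlgHom (R := k) (S := k) (A := k)
      (Algebra.TensorProduct.map J.rep I.rep (Algebra.TensorProduct.comm k H H qt.R))) = _
    rw [flipConj_endTensorEnd]
    exact congrArg (fun s => Module.endTensorEndAlgHom (R := k) (S := k) (A := k)
      (Algebra.TensorProduct.map I.rep J.rep s))
      ((Algebra.TensorProduct.comm k H H).symm_apply_apply _)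
  simp [flipL, RmatL', RmatL, hR]

theorem flipL_genL_tensor_mul_RmatL (x : GenIdx g n) :
    flipL qt I J (genL qt x (W := J.carrier ⊗[k] I.carrier) (J.tensor I).rep.toLinearMap)
        * RmatL g n qt I J
      = RmatL g n qt I J *
          (genL qt x (W := I.carrier ⊗[k] J.carrier) (I.tensor J).rep.toLinearMap :
            Lgn g n qt ⊗[k] Module.End k (I.carrier ⊗[k] J.carrier)) := by
  have hrep : ∀ h : H, flipConj I.carrier J.carrier
        (Module.endTensorEndAlgHom (R := k) (S := k) (A := k)
          (Algebra.TensorProduct.map J.rep I.rep (Bialgebra.comulAlgHom k H h)))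
          * (Rmat qt I J).val
      = (Rmat qt I J).val * Module.endTensorEndAlgHom (R := k) (S := k) (A := k)
          (Algebra.TensorProduct.map I.rep J.rep (Bialgebra.comulAlgHom k H h)) := by
    intro h
    have hR := congrArg ((Module.endTensorEndAlgHom (R := k) (S := k) (A := k)).comp
      (Algebra.TensorProduct.map I.rep J.rep)) (qt.intertwine h)
    simp only [map_mul] at hR
    exact (congrArg (· * (Rmat qt I J).val) (flipConj_endTensorEnd I.rep J.rep _)).trans hR.symm
  rw [RmatL, ← lTensor_mulRight_apply, ← lTensor_mulLeft_apply]
  change (LinearMap.mulRight k _).lTensor _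
      ((flipConj I.carrier J.carrier).toLinearMap.lTensor _ (genL qt x _)) = _
  -- `(I.tensor J).carrier` is `I.carrier ⊗[k] J.carrier` only after unfolding `FDRep.tensor`
  erw [lTensor_genL, lTensor_genL, lTensor_genL]
  exact congrArg (genL qt x) (LinearMap.ext fun h => hrep h)

end FlipL

/-- the reflection equation
`R_{IJ} X(i)₁ R'_{IJ} X(i)₂ = X(i)₂ R_{IJ} X(i)₁ R'_{IJ}` holds in
`L_{g,n}(H) ⊗ End_k(I) ⊗ End_k(J)` (identified with `L_{g,n}(H) ⊗ End_k(I ⊗ J)`), for every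
generator `X(i)` (`1 ≤ i ≤ g+n`) and all finite-dimensional left `H`-modules `I`, `J`. -/
theorem stmt2 (g n : ℕ) (qt : QuasiTriangular k H) (I J : FDRep k H) (x : GenIdx g n) :
    RmatL g n qt I J * genL1 qt x I J * RmatL' g n qt I J * genL2 qt x I J
      = genL2 qt x I J * RmatL g n qt I J * genL1 qt x I J * RmatL' g n qt I J := by
  calc RmatL g n qt I J * genL1 qt x I J * RmatL' g n qt I J * genL2 qt x I J
      = RmatL g n qt I J *
          ((genL qt x (W := I.carrier ⊗[k] J.carrier) (I.tensor J).rep.toLinearMap :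
            Lgn g n qt ⊗[k] Module.End k (I.carrier ⊗[k] J.carrier)) * RmatL' g n qt I J) := by
        rw [genL_tensor_mul_RmatL']
        simp only [mul_assoc]
    _ = flipL qt I J ((genL qt x (W := J.carrier ⊗[k] I.carrier) (J.tensor I).rep.toLinearMap :
          Lgn g n qt ⊗[k] Module.End k (J.carrier ⊗[k] I.carrier)) * RmatL' g n qt J I) *
          RmatL' g n qt I J := by
        rw [map_mul, flipL_RmatL', flipL_genL_tensor_mul_RmatL, mul_assoc]
    _ = genL2 qt x I J * RmatL g n qt I J * genL1 qt x I J * RmatL' g n qt I J := by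
        rw [genL_tensor_mul_RmatL', map_mul, map_mul, flipL_genL1, flipL_RmatL', flipL_genL2]

end CombQuant

end
end

section
/- Let V be a finite-dimensional left H-module such that every finite-dimensional left H-module is isomorphic to a direct summand of V^{⊗N} for some N ≥ 0. Then L_{g,n}(H) is generated as a k-algebra by the entries of the matrices B(i)_V, A(i)_V (1 ≤ i ≤ g) and M(i)_V (g+1 ≤ i ≤ g+n), that is, by the elements (id ⊗ λ)(X(i)_V) for λ ranging over the linear forms on End_k(V) and i ranging over 1, …, g+n. -/
/-!
Given a subalgebra `B` of `L_{g,n}(H)`, consider the modules `I` all of whose matrix entries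
`(id ⊗ λ)(X(i)_I)` lie in `B`. The fusion relation
`X(i)_{I⊗J} = X(i)_{I,1} R'_{IJ} X(i)_{J,2} R'_{IJ}⁻¹` shows that this class is closed under
tensor products, and it is closed under retracts because the entries of `X(i)_I` for a retract
`I` of `J` are entries of `X(i)_J`. For `B` generated by the entries of the `X(i)_V`, every module
is therefore in the class. The matrix coefficients of (two copies of) the regular representation
exhaust `H*`, so `B` contains the image of every generator `ι_x(φ)` of `T(V_{g,n})`.
-/

open TensorProduct

noncomputable section

set_option maxHeartbeats 1000000

namespace CombQuant

variable {k H : Type} [Field k] [Ring H] [HopfAlgebra k H] [FiniteDimensional k H]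

/-- The trivial one-dimensional `H`-module `k`, given by the counit. -/
def FDRep.trivialRep : FDRep k H where
  carrier := k
  rep := (Algebra.lmul k k).comp (Bialgebra.counitAlgHom k H)

/-- Iterated tensor power `V^{⊗N}` of an `H`-module (with `V^{⊗0}` the trivial module). -/
def FDRep.pow (V : FDRep k H) : ℕ → FDRep k H
  | 0 => FDRep.trivialRep
  | (N + 1) => V.tensor (V.pow N)

section Cntr

variable {T T' W W' : Type} [AddCommGroup T] [Module k T] [AddCommGroup T'] [Module k T']
  [AddCommGroup W] [Module k W] [AddCommGroup W'] [Module k W']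

@[simp]
lemma cntr_tmul (lam : Module.Dual k W) (t : T) (w : W) :
    cntr lam (t ⊗ₜ[k] w) = lam w • t := by
  simp [cntr]

@[simp]
lemma cntr_zero (lam : Module.Dual k W) : cntr lam (0 : T ⊗[k] W) = 0 := by
  simp [cntr]

lemma cntr_add (lam : Module.Dual k W) (u v : T ⊗[k] W) :
    cntr lam (u + v) = cntr lam u + cntr lam v := by
  simp [cntr]

lemma cntr_sub (lam : Module.Dual k W) (u v : T ⊗[k] W) :
    cntr lam (u - v) = cntr lam u - cntr lam v := by
  simp [cntr]

lemma cntr_map (f : T →ₗ[k] T') (e : W →ₗ[k] W') (lam : Module.Dual k W') (u : T ⊗[k] W) :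
    cntr lam (TensorProduct.map f e u) = f (cntr (lam ∘ₗ e) u) := by
  induction u using TensorProduct.induction_on with
  | zero => simp
  | tmul t w => simp
  | add a b ha hb => rw [map_add, cntr_add, cntr_add, ha, hb, map_add]

lemma sum_cntr_coord_tmul {ι : Type} [Fintype ι] (b : Module.Basis ι k W) (u : T ⊗[k] W) :
    ∑ i, cntr (b.coord i) u ⊗ₜ[k] b i = u := by
  induction u using TensorProduct.induction_on with
  | zero => simp
  | tmul t w =>
    conv_rhs => rw [← b.sum_repr w, tmul_sum]
    simp [smul_tmul]
  | add u v hu hv =>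
    simp only [cntr_add, add_tmul, Finset.sum_add_distrib, hu, hv]

end Cntr

section TensorSubalgebra

variable {L W : Type} [Ring L] [Algebra k L] [Ring W] [Algebra k W]

lemma mem_range_map_val_iff [FiniteDimensional k W] (B : Subalgebra k L) (u : L ⊗[k] W) :
    u ∈ (Algebra.TensorProduct.map B.val (AlgHom.id k W)).range ↔
      ∀ lam : Module.Dual k W, cntr lam u ∈ B := by
  constructor
  · rintro ⟨w, rfl⟩ lam
    induction w using TensorProduct.induction_on with
    | zero => simp
    | tmul b e => simpa using B.smul_mem b.2 (lam e)
    | add a c ha hc => rw [map_add, cntr_add]; exact B.add_mem ha hc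
  · intro h
    rw [← sum_cntr_coord_tmul (Module.finBasis k W) u]
    exact Subalgebra.sum_mem _ fun i _ =>
      ⟨(⟨_, h _⟩ : B) ⊗ₜ[k] Module.finBasis k W i, rfl⟩

lemma one_tmul_mem_range_map_val (B : Subalgebra k L) (w : W) :
    (1 : L) ⊗ₜ[k] w ∈ (Algebra.TensorProduct.map B.val (AlgHom.id k W)).range :=
  ⟨(1 : B) ⊗ₜ[k] w, rfl⟩

lemma cntr_map_algHom_left {L' : Type} [Ring L'] [Algebra k L'] (f : L →ₐ[k] L')
    (lam : Module.Dual k W) (u : L ⊗[k] W) :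
    cntr lam (Algebra.TensorProduct.map f (AlgHom.id k W) u) = f (cntr lam u) :=
  cntr_map f.toLinearMap LinearMap.id lam u

lemma cntr_map_algHom_right {W' : Type} [Ring W'] [Algebra k W'] (e : W →ₐ[k] W')
    (lam : Module.Dual k W') (u : L ⊗[k] W) :
    cntr lam (Algebra.TensorProduct.map (AlgHom.id k L) e u) = cntr (lam ∘ₗ e.toLinearMap) u :=
  cntr_map LinearMap.id e.toLinearMap lam u

end TensorSubalgebra

section Generators

variable {g n : ℕ}

def eT (x : GenIdx g n) (φ : Module.Dual k H) : Tgn k H g n :=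
  TensorAlgebra.ι k (LinearMap.single k (fun _ : GenIdx g n => Module.Dual k H) x φ)

lemma cntr_genT {W : Type} [AddCommGroup W] [Module k W] (x : GenIdx g n)
    (ρ : H →ₗ[k] Module.End k W) (lam : Module.Dual k (Module.End k W)) :
    cntr lam (genT (g := g) (n := n) x ρ) = eT x (lam ∘ₗ ρ) := by
  rw [genT, cntr_map, LinearMap.comp_id, eT, LinearMap.comp_apply]
  congr 2
  conv_rhs => rw [← (dualTensorHomEquiv k H (Module.End k W)).apply_symm_apply ρ]
  induction (dualTensorHomEquiv k H (Module.End k W)).symm ρ using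
    TensorProduct.induction_on with
  | zero => ext; simp
  | tmul φ e => ext; simp [dualTensorHom_apply, mul_comm]
  | add a b ha hb => rw [cntr_add, map_add, LinearMap.comp_add, ha, hb]

lemma cntr_genL (qt : QuasiTriangular k H) (x : GenIdx g n) {W : Type} [AddCommGroup W]
    [Module k W] (ρ : H →ₗ[k] Module.End k W) (lam : Module.Dual k (Module.End k W)) :
    cntr lam (genL qt x ρ) = lgnProj g n qt (eT x (lam ∘ₗ ρ)) := by
  rw [genL, cntr_map, LinearMap.comp_id, cntr_genT]
  rfl

lemma eq_top_of_lgnProj_eT_mem {qt : QuasiTriangular k H} {B : Subalgebra k (Lgn g n qt)}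
    (hB : ∀ x φ, lgnProj g n qt (eT x φ) ∈ B) : B = ⊤ := by
  rw [eq_top_iff]
  rintro y -
  obtain ⟨t, rfl⟩ := RingQuot.mkAlgHom_surjective k (lgnRel g n qt) y
  induction t using TensorAlgebra.induction with
  | algebraMap r => rw [AlgHom.commutes]; exact B.algebraMap_mem r
  | ι v =>
    rw [← Finset.univ_sum_single v, map_sum, map_sum]
    exact B.sum_mem fun x _ => hB x (v x)
  | mul a b ha hb => rw [map_mul]; exact B.mul_mem ha hb
  | add a b ha hb => rw [map_add]; exact B.add_mem ha hb

end Generators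

omit [FiniteDimensional k H] in
lemma FDRep.tensor_trivialRep_rep (I : FDRep k H) (h : H) :
    (I.tensor FDRep.trivialRep).rep h = embEnd1 I FDRep.trivialRep (I.rep h) := by
  have hmap : (Algebra.TensorProduct.map I.rep FDRep.trivialRep.rep).toLinearMap =
      (Algebra.TensorProduct.includeLeft.comp I.rep).toLinearMap ∘ₗ
        (TensorProduct.rid k H).toLinearMap ∘ₗ
          (Coalgebra.counit (R := k) (A := H)).lTensor H := by
    refine TensorProduct.ext' fun a b => ?_
    have htriv : (FDRep.trivialRep (k := k) (H := H)).rep b = Coalgebra.counit (R := k) b • 1 :=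
      LinearMap.ext fun c => rfl
    simp [htriv]
  change Module.endTensorEndAlgHom (R := k) (S := k) (A := k) (M := I.carrier)
      (N := FDRep.trivialRep.carrier)
      (Algebra.TensorProduct.map I.rep FDRep.trivialRep.rep (Bialgebra.comulAlgHom k H h)) =
    embEnd1 I FDRep.trivialRep (I.rep h)
  rw [embEnd1, AlgHom.comp_apply]
  congr 1
  rw [← AlgHom.toLinearMap_apply, hmap]
  simp

section Entries

variable {g n : ℕ} {qt : QuasiTriangular k H}

def EntriesIn (B : Subalgebra k (Lgn g n qt)) (I : FDRep k H) : Prop :=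
  ∀ (x : GenIdx g n) (lam : Module.Dual k (Module.End k I.carrier)),
    lgnProj g n qt (eT x (lam ∘ₗ I.rep.toLinearMap)) ∈ B

variable {B : Subalgebra k (Lgn g n qt)}

lemma EntriesIn.of_rep_eq_comp {I J : FDRep k H} (hI : EntriesIn B I)
    (φ : Module.End k I.carrier →ₗ[k] Module.End k J.carrier)
    (hφ : ∀ h, J.rep h = φ (I.rep h)) : EntriesIn B J := by
  intro x lam
  have hcoeff : lam ∘ₗ J.rep.toLinearMap = (lam ∘ₗ φ) ∘ₗ I.rep.toLinearMap :=
    LinearMap.ext fun h => congrArg lam (hφ h)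
  rw [hcoeff]
  exact hI x _

lemma EntriesIn.of_retract {I J : FDRep k H} (hJ : EntriesIn B J)
    (f : I.carrier →ₗ[k] J.carrier) (p : J.carrier →ₗ[k] I.carrier)
    (hp : ∀ h, I.rep h ∘ₗ p = p ∘ₗ J.rep h) (hpf : p ∘ₗ f = LinearMap.id) :
    EntriesIn B I :=
  hJ.of_rep_eq_comp (LinearMap.llcomp k _ _ _ p ∘ₗ LinearMap.lcomp k _ f) fun h => by
    change _ = p ∘ₗ J.rep h ∘ₗ f
    rw [← LinearMap.comp_assoc, ← hp, LinearMap.comp_assoc, hpf, LinearMap.comp_id]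

lemma lgnProj_eT_tensor_rep (I J : FDRep k H) (x : GenIdx g n)
    (lam : Module.Dual k (Module.End k (I.carrier ⊗[k] J.carrier))) :
    lgnProj g n qt (eT x (lam ∘ₗ (I.tensor J).rep.toLinearMap)) =
      lgnProj g n qt (cntr lam (genT1 x I J * (RmatT' g n qt I J).val * genT2 x I J *
        ((RmatT' g n qt I J)⁻¹).val)) := by
  have hrel := RingQuot.mkAlgHom_rel k
    (show lgnRel g n qt _ 0 from ⟨Or.inl ⟨I, J, x, lam, rfl⟩, rfl⟩)
  rw [map_zero, fusionRel, cntr_sub, map_sub, sub_eq_zero] at hrel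
  exact (congrArg (lgnProj g n qt) (cntr_genT x _ lam)).symm.trans hrel

lemma EntriesIn.tensor {I J : FDRep k H} (hI : EntriesIn B I) (hJ : EntriesIn B J) :
    EntriesIn B (I.tensor J) := by
  suffices h : ∀ x (lam : Module.Dual k (Module.End k (I.carrier ⊗[k] J.carrier))),
      lgnProj g n qt (eT x (lam ∘ₗ (I.tensor J).rep.toLinearMap)) ∈ B from h
  intro x lam
  set P := Algebra.TensorProduct.map (lgnProj g n qt)
    (AlgHom.id k (Module.End k (I.carrier ⊗[k] J.carrier)))
  set T := (Algebra.TensorProduct.map B.val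
    (AlgHom.id k (Module.End k (I.carrier ⊗[k] J.carrier)))).range
  rw [lgnProj_eT_tensor_rep, ← cntr_map_algHom_left]
  refine (mem_range_map_val_iff B _).mp ?_ lam
  have hR : ∀ r, P (Algebra.TensorProduct.includeRight r) ∈ T := fun r => by
    rw [Algebra.TensorProduct.includeRight_apply, Algebra.TensorProduct.map_tmul, map_one]
    exact one_tmul_mem_range_map_val B r
  have hX₁ : P (genT1 x I J) ∈ T := (mem_range_map_val_iff B _).mpr fun lam' => by
    rw [cntr_map_algHom_left, genT1, cntr_map_algHom_right, cntr_genT]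
    exact hI x _
  have hX₂ : P (genT2 x I J) ∈ T := (mem_range_map_val_iff B _).mpr fun lam' => by
    rw [cntr_map_algHom_left, genT2, cntr_map_algHom_right, cntr_genT]
    exact hJ x _
  rw [map_mul, map_mul, map_mul]
  exact mul_mem (mul_mem (mul_mem hX₁ (hR _)) hX₂) (hR _)

lemma EntriesIn.pow {V : FDRep k H} (hV : EntriesIn B V) (N : ℕ) :
    EntriesIn B (V.pow (N + 1)) := by
  induction N with
  | zero =>
    exact hV.of_rep_eq_comp (embEnd1 V FDRep.trivialRep).toLinearMap V.tensor_trivialRep_rep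
  | succ N ih => exact hV.tensor ih

end Entries

/-- Two copies of the left regular module: the second copy only makes the dimension at least
`2`, so that this module is not a retract of `V^{⊗0} = k`. -/
def FDRep.regularPair : FDRep k H where
  carrier := H × H
  rep := (LinearMap.prodMapAlgHom k H H).comp ((Algebra.lmul k H).prod (Algebra.lmul k H))

lemma FDRep.exists_dual_comp_regularPair_rep (φ : Module.Dual k H) :
    ∃ lam : Module.Dual k (Module.End k (H × H)),
      lam ∘ₗ (FDRep.regularPair (k := k)).rep.toLinearMap = φ :=
  ⟨φ ∘ₗ LinearMap.fst k H H ∘ₗ LinearMap.applyₗ ((1 : H), (0 : H)),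
    LinearMap.ext fun h => congrArg φ (mul_one h)⟩

lemma FDRep.not_retract_regularPair_trivialRep
    (f : (FDRep.regularPair (k := k) (H := H)).carrier →ₗ[k] FDRep.trivialRep.carrier)
    (p : (FDRep.trivialRep (k := k) (H := H)).carrier →ₗ[k] FDRep.regularPair.carrier)
    (hpf : p ∘ₗ f = LinearMap.id) : False := by
  have hf : Function.Injective f :=
    Function.LeftInverse.injective (g := p) fun a => LinearMap.congr_fun hpf a
  have hle : Module.finrank k (H × H) ≤ Module.finrank k k :=
    LinearMap.finrank_le_finrank_of_injective hf
  have := Bialgebra.nontrivial k (A := H)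
  have hpos : 0 < Module.finrank k H := Module.finrank_pos
  rw [Module.finrank_prod, Module.finrank_self] at hle
  omega

/-- if every finite-dimensional left `H`-module is (isomorphic to) a direct
summand of some tensor power `V^{⊗N}`, then `L_{g,n}(H)` is generated as a `k`-algebra by the
entries `(id ⊗ λ)(X(i)_V)` of the matrices `B(i)_V, A(i)_V, M(j)_V`. -/
theorem stmt9 (g n : ℕ) (qt : QuasiTriangular k H) (V : FDRep k H)
    (hV : ∀ I : FDRep k H, ∃ (N : ℕ)
      (f : I.carrier →ₗ[k] (V.pow N).carrier) (p : (V.pow N).carrier →ₗ[k] I.carrier),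
        (∀ h : H, ((V.pow N).rep h) ∘ₗ f = f ∘ₗ (I.rep h)) ∧
        (∀ h : H, (I.rep h) ∘ₗ p = p ∘ₗ ((V.pow N).rep h)) ∧
        p ∘ₗ f = LinearMap.id) :
    Algebra.adjoin k
      { t : Lgn g n qt | ∃ (x : GenIdx g n) (lam : Module.Dual k (Module.End k V.carrier)),
          t = cntr lam (genL qt x V.rep.toLinearMap) } = ⊤ := by
  set B := Algebra.adjoin k
    { t : Lgn g n qt | ∃ (x : GenIdx g n) (lam : Module.Dual k (Module.End k V.carrier)),
        t = cntr lam (genL qt x V.rep.toLinearMap) }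
  have hVB : EntriesIn B V := fun x lam =>
    Algebra.subset_adjoin ⟨x, lam, (cntr_genL qt x _ lam).symm⟩
  refine eq_top_of_lgnProj_eT_mem fun x φ => ?_
  obtain ⟨N, f, p, -, hp, hpf⟩ := hV FDRep.regularPair
  obtain ⟨lam, rfl⟩ := FDRep.exists_dual_comp_regularPair_rep φ
  cases N with
  | zero => exact (FDRep.not_retract_regularPair_trivialRep f p hpf).elim
  | succ N => exact (hVB.pow N).of_retract f p hp hpf x lam

end CombQuant

end
end

section
/- The subspaces J₁ and J₂ are invariant under both operators: A(J₁) ⊆ J₁, B(J₁) ⊆ J₁, A(J₂) ⊆ J₂ and B(J₂) ⊆ J₂. -/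
noncomputable section

/-- Index set for the GTA basis: `x⁺_s` (s = 1..p), `x⁻_s` (s = 1..p), `g_s` (s = 1..p-1). -/
abbrev GTAIdx (p : ℕ) := (Fin p ⊕ Fin p) ⊕ Fin (p - 1)

/-- The underlying (3p-1)-dimensional complex vector space. -/
abbrev GTA (p : ℕ) := GTAIdx p → ℂ

/-- `ε = exp(iπ/2p)`. -/
def eps (p : ℕ) : ℂ := Complex.exp (Real.pi * Complex.I / (2 * p))

/-- The basis vector `x⁺_s` for `1 ≤ s ≤ p`, and `0` otherwise. -/
def xp (p : ℕ) (s : ℕ) : GTA p :=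
  if h : 1 ≤ s ∧ s ≤ p then Pi.single (Sum.inl (Sum.inl ⟨s - 1, by omega⟩)) 1 else 0

/-- The basis vector `x⁻_s` for `1 ≤ s ≤ p`, and `0` otherwise. -/
def xm (p : ℕ) (s : ℕ) : GTA p :=
  if h : 1 ≤ s ∧ s ≤ p then Pi.single (Sum.inl (Sum.inr ⟨s - 1, by omega⟩)) 1 else 0

/-- The basis vector `g_s` for `1 ≤ s ≤ p-1`, and `0` otherwise. -/
def gv (p : ℕ) (s : ℕ) : GTA p :=
  if h : 1 ≤ s ∧ s ≤ p - 1 then Pi.single (Sum.inr ⟨s - 1, by omega⟩) 1 else 0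

/-- The quantum integer `[s] = (ε^{2s} - ε^{-2s})/(ε² - ε^{-2})`. -/
def br (p : ℕ) (s : ℕ) : ℂ :=
  ((eps p) ^ (2 * s) - (eps p)⁻¹ ^ (2 * s)) / ((eps p) ^ 2 - (eps p)⁻¹ ^ 2)

/-- The operator `A` (action of the curve `a`) in the GTA basis. -/
def Aop (p : ℕ) : Module.End ℂ (GTA p) :=
  (Pi.basisFun ℂ (GTAIdx p)).constr ℂ fun i =>
    match i with
    | .inl (.inl i) =>
        (-((eps p) ^ (2 * (i.1 + 1)) + (eps p)⁻¹ ^ (2 * (i.1 + 1)))) • xp p (i.1 + 1)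
    | .inl (.inr i) =>
        (((eps p) ^ (2 * (i.1 + 1)) + (eps p)⁻¹ ^ (2 * (i.1 + 1)))) • xm p (i.1 + 1)
    | .inr i =>
        (-((eps p) ^ (2 * (i.1 + 1)) + (eps p)⁻¹ ^ (2 * (i.1 + 1)))) • gv p (i.1 + 1)
          - (((eps p) ^ 2 - (eps p)⁻¹ ^ 2) ^ 2) • (xp p (i.1 + 1) + xm p (p - (i.1 + 1)))

/-- The operator `B` (action of the curve `b`) in the GTA basis. -/
def Bop (p : ℕ) : Module.End ℂ (GTA p) :=
  (Pi.basisFun ℂ (GTAIdx p)).constr ℂ fun i =>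
    match i with
    | .inl (.inl i) =>
        if i.1 + 1 = p then (2 : ℂ) • xp p (p - 1) + (2 : ℂ) • xm p 1
        else xp p i.1 + xp p (i.1 + 2)
    | .inl (.inr i) =>
        if i.1 + 1 = p then (2 : ℂ) • xm p (p - 1) + (2 : ℂ) • xp p 1
        else xm p i.1 + xm p (i.1 + 2)
    | .inr i =>
        (br p i.1 / br p (i.1 + 1)) • gv p i.1
          + (br p (i.1 + 2) / br p (i.1 + 1)) • gv p (i.1 + 2)

/-- `J₁`: the span of the vectors `x⁺_s + x⁻_{p-s}` (1 ≤ s ≤ p-1), `x⁺_p` and `x⁻_p`. -/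
def J1 (p : ℕ) : Submodule ℂ (GTA p) :=
  Submodule.span ℂ
    ((Set.range fun s : Fin (p - 1) => xp p (s.1 + 1) + xm p (p - (s.1 + 1)))
      ∪ {xp p p, xm p p})

/-- `J₂ = J₁ + span{x⁺_s : 1 ≤ s ≤ p-1}`. -/
def J2 (p : ℕ) : Submodule ℂ (GTA p) :=
  J1 p ⊔ Submodule.span ℂ (Set.range fun s : Fin (p - 1) => xp p (s.1 + 1))

end

/-!
Write `xsum p t = x⁺_t + x⁻_{p-t}` for `0 ≤ t ≤ p`; because `x⁺_0 = x⁻_0 = 0`, these vectors are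
exactly the generators of `J₁`, including `x⁻_p` (`t = 0`) and `x⁺_p` (`t = p`).
`A` is diagonal on the `x`-vectors, and since `ε^{2p} = -1` its eigenvalue `ε^{2s} + ε^{-2s}`
changes sign under `s ↦ p - s`, so every `xsum p t` is an eigenvector of `A`.
`B` sends `xsum p t` to `xsum p (t-1) + xsum p (t+1)` for `0 < t < p`, and `x⁺_p`, `x⁻_p` to
`2 xsum p (p-1)`, `2 xsum p 1`. For `J₂ = J₁ + span{x⁺_s}` it remains to see that `B x⁺_s` is a sum
of two `x⁺`'s, each in `J₂` (`x⁺_p` lies in `J₁`).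
-/

namespace Module.End

variable {R M : Type*} [Semiring R] [AddCommMonoid M] [Module R M] {f : End R M}

theorem span_mem_invtSubmodule {s : Set M} (h : ∀ x ∈ s, f x ∈ Submodule.span R s) :
    Submodule.span R s ∈ f.invtSubmodule :=
  (mem_invtSubmodule_iff_map_le f).2 ((Submodule.map_span_le f s _).2 h)

theorem sup_mem_invtSubmodule {p q : Submodule R M} (hp : p ∈ f.invtSubmodule)
    (hq : q.map f ≤ p ⊔ q) : p ⊔ q ∈ f.invtSubmodule := by
  rw [mem_invtSubmodule_iff_map_le, Submodule.map_sup]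
  exact sup_le (((mem_invtSubmodule_iff_map_le f).1 hp).trans le_sup_left) hq

end Module.End

open Module.End

noncomputable section

theorem eps_pow_two_mul_self {p : ℕ} (hp : p ≠ 0) : eps p ^ (2 * p) = -1 := by
  rw [eps, ← Complex.exp_nat_mul]
  have hp' : (p : ℂ) ≠ 0 := Nat.cast_ne_zero.2 hp
  have : ((2 * p : ℕ) : ℂ) * (Real.pi * Complex.I / (2 * p)) = Real.pi * Complex.I := by
    push_cast
    field_simp
  rw [this, Complex.exp_pi_mul_I]

theorem eps_ne_zero (p : ℕ) : eps p ≠ 0 := Complex.exp_ne_zero _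

def aEigen (p s : ℕ) : ℂ := eps p ^ (2 * s) + (eps p)⁻¹ ^ (2 * s)

theorem aEigen_sub {p s : ℕ} (hp : p ≠ 0) (hs : s ≤ p) : aEigen p (p - s) = -aEigen p s := by
  have h : eps p ^ (2 * (p - s)) = -(eps p ^ (2 * s))⁻¹ := by
    rw [Nat.mul_sub, pow_sub₀ _ (eps_ne_zero p) (by omega), eps_pow_two_mul_self hp,
      neg_one_mul]
  rw [aEigen, aEigen, inv_pow, inv_pow, h, inv_neg, inv_inv]
  ring

theorem xp_zero (p : ℕ) : xp p 0 = 0 := by simp [xp]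

theorem xm_zero (p : ℕ) : xm p 0 = 0 := by simp [xm]

theorem xp_succ {p : ℕ} (i : Fin p) : xp p (i + 1) = Pi.single (.inl (.inl i)) 1 := by
  simp [xp]

theorem xm_succ {p : ℕ} (i : Fin p) : xm p (i + 1) = Pi.single (.inl (.inr i)) 1 := by
  simp [xm]

theorem xp_of_lt {p s : ℕ} (hs : p < s) : xp p s = 0 := dif_neg (by omega)

theorem xm_of_lt {p s : ℕ} (hs : p < s) : xm p s = 0 := dif_neg (by omega)

theorem basisFun_constr_single {R ι M : Type*} [CommSemiring R] [Finite ι] [DecidableEq ι]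
    [AddCommMonoid M] [Module R M] (f : ι → M) (i : ι) :
    (Pi.basisFun R ι).constr R f (Pi.single i 1) = f i := by
  rw [← Pi.basisFun_apply, Module.Basis.constr_basis]

theorem Aop_xp (p s : ℕ) : Aop p (xp p s) = -aEigen p s • xp p s := by
  rcases Nat.lt_or_ge p s with hs | hs
  · simp [xp_of_lt hs]
  obtain _ | s := s
  · simp [xp_zero]
  conv_lhs => rw [← Fin.val_mk (Nat.lt_of_succ_le hs), xp_succ, Aop, basisFun_constr_single]
  rfl

theorem Aop_xm (p s : ℕ) : Aop p (xm p s) = aEigen p s • xm p s := by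
  rcases Nat.lt_or_ge p s with hs | hs
  · simp [xm_of_lt hs]
  obtain _ | s := s
  · simp [xm_zero]
  conv_lhs => rw [← Fin.val_mk (Nat.lt_of_succ_le hs), xm_succ, Aop, basisFun_constr_single]
  rfl

theorem Bop_xp {p s : ℕ} (hs : s + 1 < p) : Bop p (xp p (s + 1)) = xp p s + xp p (s + 2) := by
  conv_lhs => rw [← Fin.val_mk (hs.trans' s.lt_succ_self), xp_succ, Bop, basisFun_constr_single]
  exact if_neg hs.ne

theorem Bop_xm {p s : ℕ} (hs : s + 1 < p) : Bop p (xm p (s + 1)) = xm p s + xm p (s + 2) := by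
  conv_lhs => rw [← Fin.val_mk (hs.trans' s.lt_succ_self), xm_succ, Bop, basisFun_constr_single]
  exact if_neg hs.ne

theorem Bop_xp_self {p : ℕ} (hp : p ≠ 0) :
    Bop p (xp p p) = (2 : ℂ) • xp p (p - 1) + (2 : ℂ) • xm p 1 := by
  obtain ⟨q, rfl⟩ := Nat.exists_eq_succ_of_ne_zero hp
  have h : xp (q + 1) (q + 1) = Pi.single _ 1 := xp_succ (Fin.last q)
  rw [h, Bop, basisFun_constr_single]
  exact if_pos rfl

theorem Bop_xm_self {p : ℕ} (hp : p ≠ 0) :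
    Bop p (xm p p) = (2 : ℂ) • xm p (p - 1) + (2 : ℂ) • xp p 1 := by
  obtain ⟨q, rfl⟩ := Nat.exists_eq_succ_of_ne_zero hp
  have h : xm (q + 1) (q + 1) = Pi.single _ 1 := xm_succ (Fin.last q)
  rw [h, Bop, basisFun_constr_single]
  exact if_pos rfl

def xsum (p t : ℕ) : GTA p := xp p t + xm p (p - t)

theorem xsum_mem_J1 {p t : ℕ} (ht : t ≤ p) : xsum p t ∈ J1 p := by
  apply Submodule.subset_span
  obtain rfl | ht0 := Nat.eq_zero_or_pos t
  · simp [xsum, xp_zero]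
  obtain rfl | htp := ht.eq_or_lt
  · simp [xsum, xm_zero]
  refine Or.inl ⟨⟨t - 1, by omega⟩, ?_⟩
  simp only [Nat.sub_add_cancel ht0, xsum]

theorem Aop_xsum {p t : ℕ} (hp : p ≠ 0) (ht : t ≤ p) :
    Aop p (xsum p t) = -aEigen p t • xsum p t := by
  rw [xsum, map_add, Aop_xp, Aop_xm, aEigen_sub hp ht, smul_add]

theorem Bop_xsum {p t : ℕ} (ht : t + 1 < p) :
    Bop p (xsum p (t + 1)) = xsum p t + xsum p (t + 2) := by
  obtain ⟨u, hu⟩ : ∃ u, p - (t + 1) = u + 1 := ⟨p - (t + 2), by omega⟩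
  have hxm : Bop p (xm p (p - (t + 1))) = xm p (p - (t + 2)) + xm p (p - t) := by
    rw [hu, Bop_xm (by omega), show p - (t + 2) = u by omega, show p - t = u + 2 by omega]
  rw [xsum, map_add, Bop_xp ht, hxm, xsum, xsum]
  abel

theorem Bop_xp_self_eq_xsum {p : ℕ} (hp : p ≠ 0) : Bop p (xp p p) = (2 : ℂ) • xsum p (p - 1) := by
  rw [Bop_xp_self hp, xsum, Nat.sub_sub_self (Nat.one_le_iff_ne_zero.2 hp), smul_add]

theorem Bop_xm_self_eq_xsum {p : ℕ} (hp : p ≠ 0) : Bop p (xm p p) = (2 : ℂ) • xsum p 1 := by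
  rw [Bop_xm_self hp, xsum, smul_add, add_comm]

theorem J1_mem_invtSubmodule_Aop {p : ℕ} (hp : p ≠ 0) : J1 p ∈ (Aop p).invtSubmodule := by
  refine span_mem_invtSubmodule ?_
  rintro _ (⟨s, rfl⟩ | rfl | rfl)
  · change Aop p (xsum p (s + 1)) ∈ J1 p
    rw [Aop_xsum hp (by omega)]
    exact Submodule.smul_mem _ _ (xsum_mem_J1 (by omega))
  · rw [Aop_xp]
    exact Submodule.smul_mem _ _ (Submodule.subset_span (by simp))
  · rw [Aop_xm]
    exact Submodule.smul_mem _ _ (Submodule.subset_span (by simp))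

theorem J1_mem_invtSubmodule_Bop {p : ℕ} (hp : p ≠ 0) : J1 p ∈ (Bop p).invtSubmodule := by
  refine span_mem_invtSubmodule ?_
  rintro _ (⟨s, rfl⟩ | rfl | rfl)
  · change Bop p (xsum p (s + 1)) ∈ J1 p
    rw [Bop_xsum (by omega)]
    exact add_mem (xsum_mem_J1 (by omega)) (xsum_mem_J1 (by omega))
  · rw [Bop_xp_self_eq_xsum hp]
    exact Submodule.smul_mem _ _ (xsum_mem_J1 (by omega))
  · rw [Bop_xm_self_eq_xsum hp]
    exact Submodule.smul_mem _ _ (xsum_mem_J1 (by omega))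

theorem xp_mem_J2 {p t : ℕ} (ht : t ≤ p) : xp p t ∈ J2 p := by
  obtain rfl | ht0 := Nat.eq_zero_or_pos t
  · simp [xp_zero]
  obtain rfl | htp := ht.eq_or_lt
  · exact Submodule.mem_sup_left (Submodule.subset_span (by simp))
  refine Submodule.mem_sup_right (Submodule.subset_span ⟨⟨t - 1, by omega⟩, ?_⟩)
  simp only [Nat.sub_add_cancel ht0]

theorem J2_mem_invtSubmodule_Aop {p : ℕ} (hp : p ≠ 0) : J2 p ∈ (Aop p).invtSubmodule := by
  refine invtSubmodule.sup_mem (J1_mem_invtSubmodule_Aop hp) (span_mem_invtSubmodule ?_)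
  rintro _ ⟨s, rfl⟩
  rw [Aop_xp]
  exact Submodule.smul_mem _ _ (Submodule.subset_span ⟨s, rfl⟩)

theorem J2_mem_invtSubmodule_Bop {p : ℕ} (hp : p ≠ 0) : J2 p ∈ (Bop p).invtSubmodule := by
  refine sup_mem_invtSubmodule (J1_mem_invtSubmodule_Bop hp) ((Submodule.map_span_le _ _ _).2 ?_)
  rintro _ ⟨s, rfl⟩
  rw [Bop_xp (by omega)]
  exact add_mem (xp_mem_J2 (by omega)) (xp_mem_J2 (by omega))

end

/-- the subspaces `J₁` and `J₂` are invariant under both operators `A` and `B`. -/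
theorem stmt10 (p : ℕ) (hp : 2 ≤ p) :
    (∀ v ∈ J1 p, Aop p v ∈ J1 p) ∧ (∀ v ∈ J1 p, Bop p v ∈ J1 p) ∧
    (∀ v ∈ J2 p, Aop p v ∈ J2 p) ∧ (∀ v ∈ J2 p, Bop p v ∈ J2 p) := by
  have hp₀ : p ≠ 0 := by omega
  exact ⟨J1_mem_invtSubmodule_Aop hp₀, J1_mem_invtSubmodule_Bop hp₀,
    J2_mem_invtSubmodule_Aop hp₀, J2_mem_invtSubmodule_Bop hp₀⟩
end

section
/- The factor J₂/J₁ is simple under the two operators: every subspace W with J₁ ⊆ W ⊆ J₂, A(W) ⊆ W and B(W) ⊆ W equals J₁ or J₂. -/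
/-! Modulo `J₁`, `J₂` is spanned by `x⁺_1, …, x⁺_{p-1}`, eigenvectors of `A` with the pairwise
distinct eigenvalues `-2 cos (sπ/p)`. A subspace `W` strictly above `J₁` therefore contains a
nonzero combination of them, and, separating eigenvalues, some `x⁺_s` itself. Since
`B x⁺_s = x⁺_{s-1} + x⁺_{s+1}`, the same separation (which also covers `x⁺_0 = 0` and `x⁺_p`, the
eigenvalues staying distinct on `0 ≤ s ≤ p`) passes membership to both neighbours, so `W`
contains every `x⁺_s` and equals `J₂`. -/

theorem Submodule.smul_mem_of_sum_smul_eigenvectors_mem {K M ι : Type*} [Field K]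
    [AddCommGroup M] [Module K M] {f : Module.End K M} {W : Submodule K M}
    (hW : ∀ x ∈ W, f x ∈ W) {v : ι → M} {μ : ι → K} {s : Finset ι} (hμ : Set.InjOn μ s)
    (hv : ∀ i ∈ s, f (v i) = μ i • v i) {a : ι → K} (h : ∑ i ∈ s, a i • v i ∈ W)
    {i : ι} (hi : i ∈ s) : a i • v i ∈ W := by
  classical
  induction s using Finset.induction_on generalizing a i with
  | empty => simp at hi
  | insert j s hj ih =>
    rw [Finset.sum_insert hj] at h
    have hvs : ∀ i ∈ s, f (v i) = μ i • v i := fun i hi => hv i (by simp [hi])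
    have hfsum : f (∑ i ∈ s, a i • v i) = ∑ i ∈ s, (a i * μ i) • v i := by
      simp only [map_sum, map_smul]
      exact Finset.sum_congr rfl fun i hi => by rw [hvs i hi, smul_smul]
    -- `f - μ j` kills the `j`-th term and rescales the others by `μ i - μ j ≠ 0`.
    have hrest : ∀ i ∈ s, a i • v i ∈ W := by
      have hshift : ∑ i ∈ s, (a i * (μ i - μ j)) • v i ∈ W := by
        convert W.sub_mem (hW _ h) (W.smul_mem (μ j) h) using 1
        rw [map_add, map_smul, hv j (by simp), hfsum]
        simp only [mul_sub, sub_smul, Finset.sum_sub_distrib, smul_add, Finset.smul_sum,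
          smul_smul, mul_comm (μ j)]
        module
      intro i hi
      have hne : μ i - μ j ≠ 0 :=
        sub_ne_zero.mpr fun he => hj (hμ (by simp [hi]) (by simp) he ▸ hi)
      have := W.smul_mem (μ i - μ j)⁻¹ (ih (hμ.mono (by simp)) hvs hshift hi)
      rwa [smul_smul, mul_comm, mul_inv_cancel_right₀ hne] at this
    rcases Finset.mem_insert.mp hi with rfl | hi
    · simpa using W.sub_mem h (W.sum_mem hrest)
    · exact hrest i hi

lemma eps_pow_add_inv_pow {p : ℕ} (hp : p ≠ 0) (s : ℕ) :
    eps p ^ (2 * s) + (eps p)⁻¹ ^ (2 * s) = ((2 * Real.cos (s * Real.pi / p) : ℝ) : ℂ) := by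
  have h : eps p ^ (2 * s) = Complex.exp ((s * Real.pi / p : ℝ) * Complex.I) := by
    rw [eps, ← Complex.exp_nat_mul]
    congr 1
    push_cast
    field_simp
  rw [inv_pow, h, ← Complex.exp_neg, ← neg_mul]
  push_cast
  exact (Complex.two_cos _).symm

lemma injOn_neg_eps_pow_add_inv_pow (p : ℕ) :
    Set.InjOn (fun s : ℕ => -(eps p ^ (2 * s) + (eps p)⁻¹ ^ (2 * s))) (Set.Iic p) := by
  intro s hs t ht h
  rw [Set.mem_Iic] at hs ht
  rcases eq_or_ne p 0 with rfl | hp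
  · omega
  have hpR : (0 : ℝ) < p := by positivity
  have hIcc : ∀ k ≤ p, (k : ℝ) * Real.pi / p ∈ Set.Icc 0 Real.pi := fun k hk =>
    ⟨by positivity, div_le_of_le_mul₀ hpR.le Real.pi_pos.le (by rw [mul_comm]; gcongr)⟩
  simp only [eps_pow_add_inv_pow hp, neg_inj, Complex.ofReal_inj] at h
  have := Real.injOn_cos (hIcc s hs) (hIcc t ht) (mul_right_injective₀ two_ne_zero h)
  field_simp at this
  exact_mod_cast this

lemma xp_eq_basisFun (p : ℕ) (i : Fin p) :
    xp p (i.1 + 1) = Pi.basisFun ℂ (GTAIdx p) (.inl (.inl i)) := by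
  simp [xp, Pi.basisFun_apply]

lemma Aop_xp_s12 (p s : ℕ) :
    Aop p (xp p s) = -(eps p ^ (2 * s) + (eps p)⁻¹ ^ (2 * s)) • xp p s := by
  by_cases hs : 1 ≤ s ∧ s ≤ p
  · obtain ⟨i, rfl⟩ : ∃ i : Fin p, i.1 + 1 = s := ⟨⟨s - 1, by omega⟩, by simp; omega⟩
    rw [Aop, xp_eq_basisFun, Module.Basis.constr_basis, ← xp_eq_basisFun]
  · simp [xp, hs]

lemma Bop_xp_s12 (p : ℕ) (i : Fin p) (hi : i.1 + 1 ≠ p) :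
    Bop p (xp p (i.1 + 1)) = xp p i.1 + xp p (i.1 + 2) := by
  rw [xp_eq_basisFun, Bop, Module.Basis.constr_basis]
  exact if_neg hi

section Invariant

variable {p : ℕ} {W : Submodule ℂ (GTA p)} (hA : ∀ v ∈ W, Aop p v ∈ W)
include hA

lemma exists_xp_mem_of_sum_mem {c : Fin (p - 1) → ℂ} (hc : c ≠ 0)
    (h : ∑ t, c t • xp p (t.1 + 1) ∈ W) : ∃ t : Fin (p - 1), xp p (t.1 + 1) ∈ W := by
  obtain ⟨t, ht⟩ := Function.ne_iff.mp hc
  have hinj : Set.InjOn (fun t : Fin (p - 1) => -(eps p ^ (2 * (t.1 + 1)) +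
      (eps p)⁻¹ ^ (2 * (t.1 + 1)))) (Finset.univ : Finset (Fin (p - 1))) :=
    fun a _ b _ hab => Fin.ext <| Nat.succ_injective <|
      injOn_neg_eps_pow_add_inv_pow p (by simp; omega) (by simp; omega) hab
  exact ⟨t, (W.smul_mem_iff ht).mp <| Submodule.smul_mem_of_sum_smul_eigenvectors_mem hA hinj
    (fun _ _ => Aop_xp_s12 p _) h (Finset.mem_univ t)⟩

lemma xp_mem_of_add_mem {s t : ℕ} (hst : s ≠ t) (hs : s ≤ p) (ht : t ≤ p)
    (h : xp p s + xp p t ∈ W) : xp p s ∈ W := by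
  have hinj : Set.InjOn (fun s : ℕ => -(eps p ^ (2 * s) + (eps p)⁻¹ ^ (2 * s)))
      ({s, t} : Finset ℕ) :=
    (injOn_neg_eps_pow_add_inv_pow p).mono (by simp [Set.insert_subset_iff, hs, ht])
  simpa using Submodule.smul_mem_of_sum_smul_eigenvectors_mem hA hinj (a := fun _ => 1)
    (fun _ _ => Aop_xp_s12 p _) (by simpa [Finset.sum_pair hst] using h) (Finset.mem_insert_self s {t})

variable (hB : ∀ v ∈ W, Bop p v ∈ W)
include hB

lemma xp_sub_one_mem_and_xp_add_one_mem {s : ℕ} (hs : 1 ≤ s) (hsp : s + 1 ≤ p)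
    (h : xp p s ∈ W) : xp p (s - 1) ∈ W ∧ xp p (s + 1) ∈ W := by
  obtain ⟨i, rfl⟩ : ∃ i : Fin p, i.1 + 1 = s := ⟨⟨s - 1, by omega⟩, by simp; omega⟩
  have hsum := hB _ h
  rw [Bop_xp_s12 p i (by omega)] at hsum
  exact ⟨xp_mem_of_add_mem hA (by omega) (by omega) (by omega) hsum,
    xp_mem_of_add_mem hA (by omega) (by omega) (by omega) ((add_comm _ _).subst hsum)⟩

lemma xp_mem_iff_xp_one_mem {s : ℕ} (hs : 1 ≤ s) (hsp : s + 1 ≤ p) :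
    xp p s ∈ W ↔ xp p 1 ∈ W := by
  induction s, hs using Nat.le_induction with
  | base => rfl
  | succ s hs ih =>
    rw [← ih (by omega)]
    exact ⟨fun h => (xp_sub_one_mem_and_xp_add_one_mem hA hB (by omega) hsp h).1,
      fun h => (xp_sub_one_mem_and_xp_add_one_mem hA hB hs (by omega) h).2⟩

end Invariant

theorem stmt12_general (p : ℕ) :
    ∀ W : Submodule ℂ (GTA p), J1 p ≤ W → W ≤ J2 p →
      (∀ v ∈ W, Aop p v ∈ W) → (∀ v ∈ W, Bop p v ∈ W) →
      W = J1 p ∨ W = J2 p := by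
  intro W hJ1 hJ2 hA hB
  by_cases hW : W ≤ J1 p
  · exact Or.inl (le_antisymm hW hJ1)
  obtain ⟨w, hwW, hwJ1⟩ := SetLike.not_le_iff_exists.mp hW
  obtain ⟨j, hj, x, hx, rfl⟩ := Submodule.mem_sup.mp (hJ2 hwW)
  obtain ⟨c, rfl⟩ := (Submodule.mem_span_range_iff_exists_fun ℂ).mp hx
  have hc : c ≠ 0 := by
    rintro rfl
    simp [hj] at hwJ1
  obtain ⟨t, ht⟩ := exists_xp_mem_of_sum_mem hA hc (by simpa using W.sub_mem hwW (hJ1 hj))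
  have hone := (xp_mem_iff_xp_one_mem hA hB (by omega) (by omega)).mp ht
  refine Or.inr (le_antisymm hJ2 (sup_le hJ1 (Submodule.span_le.mpr ?_)))
  exact Set.range_subset_iff.mpr fun s =>
    (xp_mem_iff_xp_one_mem hA hB (by omega) (by omega)).mpr hone

/-- the factor `J₂/J₁` is simple under the two operators `A`, `B`: every subspace
`W` with `J₁ ⊆ W ⊆ J₂` invariant under `A` and `B` equals `J₁` or `J₂`. -/
theorem stmt12 (p : ℕ) (hp : 2 ≤ p) :
    ∀ W : Submodule ℂ (GTA p), J1 p ≤ W → W ≤ J2 p →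
      (∀ v ∈ W, Aop p v ∈ W) → (∀ v ∈ W, Bop p v ∈ W) →
      W = J1 p ∨ W = J2 p :=
  stmt12_general p
end
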